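/- Let Γ be a density matrix (a positive trace-class operator of trace 1) on a separable Hilbert space with spectral decomposition Γ = ∑_α λ_α |ψ_α⟩⟨ψ_α| where (ψ_α) is an orthonormal family, and let (P_α) be a family of one-dimensional orthogonal projections (not necessarily mutually orthogonal). Define Γ̂ = ∑_α λ_α P_α. Then the von Neumann entropies satisfy S(Γ̂) ≥ S(Γ) − log Tr(∑_α P_α Γ̂), where S(Γ) = −Tr(Γ log Γ). -/

import Mathlib

open Matrix

/-- Von Neumann entropy `−Tr(A log A)` of a Hermitian matrix, defined through its
eigenvalues (with the convention `0 · log 0 = 0`). -/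
noncomputable def vnEntropy {n : ℕ} {A : Matrix (Fin n) (Fin n) ℂ} (hA : A.IsHermitian) : ℝ :=
  -∑ i, hA.eigenvalues i * Real.log (hA.eigenvalues i)

/-- The rank-one projection `|v⟩⟨v|` associated to a vector `v ∈ ℂⁿ`. -/
noncomputable def rankOneProj {n : ℕ} (v : EuclideanSpace ℂ (Fin n)) :
    Matrix (Fin n) (Fin n) ℂ :=
  Matrix.vecMulVec (WithLp.equiv 2 (Fin n → ℂ) v) (star (WithLp.equiv 2 (Fin n → ℂ) v))

local notation "⟪" x ", " y "⟫" => inner (𝕜 := ℂ) x y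

lemma inner_eq_star_dotProduct' {n : ℕ} (x y : EuclideanSpace ℂ (Fin n)) :
    ⟪x, y⟫ = star (WithLp.equiv 2 (Fin n → ℂ) x) ⬝ᵥ WithLp.equiv 2 (Fin n → ℂ) y := by
  rw [EuclideanSpace.inner_eq_star_dotProduct, dotProduct_comm]; rfl

lemma mulVec_eigenvectorBasis' {n : ℕ} {A : Matrix (Fin n) (Fin n) ℂ} (hA : A.IsHermitian)
    (j : Fin n) : A *ᵥ WithLp.equiv 2 (Fin n → ℂ) (hA.eigenvectorBasis j)
      = (hA.eigenvalues j) • WithLp.equiv 2 (Fin n → ℂ) (hA.eigenvectorBasis j) :=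
  hA.mulVec_eigenvectorBasis j

/-! ### Real-analysis lemmas -/

/-- Jensen's inequality for `Real.log` via the tangent-line trick. -/
lemma jensen_log {ι : Type*} [Fintype ι] (w x : ι → ℝ) (hw : ∀ i, 0 ≤ w i)
    (hsum : ∑ i, w i = 1) (hx : ∀ i, w i ≠ 0 → 0 < x i)
    (hs : 0 < ∑ i, w i * x i) :
    ∑ i, w i * Real.log (x i) ≤ Real.log (∑ i, w i * x i) := by
  set s := ∑ i, w i * x i with hsdef
  have key : ∀ i, w i * Real.log (x i) ≤ w i * (Real.log s + x i / s - 1) := by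
    intro i
    rcases eq_or_ne (w i) 0 with h | h
    · simp [h]
    · have hxi := hx i h
      have h1 : Real.log (x i / s) ≤ x i / s - 1 :=
        Real.log_le_sub_one_of_pos (div_pos hxi hs)
      have h2 : Real.log (x i) - Real.log s ≤ x i / s - 1 := by
        rwa [Real.log_div hxi.ne' hs.ne'] at h1
      have := hw i
      nlinarith
  calc ∑ i, w i * Real.log (x i) ≤ ∑ i, w i * (Real.log s + x i / s - 1) :=
        Finset.sum_le_sum fun i _ => key i
    _ = ∑ i, (Real.log s * w i + (w i * x i) / s - w i) := by
        apply Finset.sum_congr rfl; intro i _; ring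
    _ = Real.log s * (∑ i, w i) + (∑ i, w i * x i) / s - ∑ i, w i := by
        rw [Finset.sum_sub_distrib, Finset.sum_add_distrib, ← Finset.mul_sum, ← Finset.sum_div]
    _ = Real.log s := by rw [hsum, ← hsdef, div_self hs.ne']; ring

/-- Tangent-line bound for the convex function `x ↦ x log x` (with `0 log 0 = 0`). -/
lemma xlogx_jensen {ι : Type*} [Fintype ι] (r κ : ι → ℝ) (hr : ∀ i, 0 ≤ r i)
    (hκ : ∀ i, 0 ≤ κ i) (hrsum : ∑ i, r i = 1) :
    (∑ i, r i * κ i) * Real.log (∑ i, r i * κ i) ≤ ∑ i, r i * (κ i * Real.log (κ i)) := by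
  set l := ∑ i, r i * κ i with hldef
  have hl0 : 0 ≤ l := Finset.sum_nonneg fun i _ => mul_nonneg (hr i) (hκ i)
  rcases eq_or_lt_of_le hl0 with h0 | hl
  · rw [← h0]
    simp only [zero_mul]
    apply Finset.sum_nonneg
    intro i _
    have hz : r i * κ i = 0 := by
      by_contra h
      have hpos : 0 < r i * κ i :=
        lt_of_le_of_ne (mul_nonneg (hr i) (hκ i)) (Ne.symm h)
      have hle := Finset.single_le_sum (f := fun i => r i * κ i)
        (fun i _ => mul_nonneg (hr i) (hκ i)) (Finset.mem_univ i)
      rw [← hldef, ← h0] at hle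
      exact absurd hle (not_le.2 hpos)
    rcases mul_eq_zero.1 hz with h | h
    · simp [h]
    · simp [h]
  · have key : ∀ i, r i * (κ i * Real.log l + κ i - l) ≤ r i * (κ i * Real.log (κ i)) := by
      intro i
      apply mul_le_mul_of_nonneg_left _ (hr i)
      rcases eq_or_lt_of_le (hκ i) with h | h
      · rw [← h]; simp; linarith
      · have h1 : Real.log (l / κ i) ≤ l / κ i - 1 :=
          Real.log_le_sub_one_of_pos (div_pos hl h)
        rw [Real.log_div hl.ne' h.ne'] at h1
        have h2 : κ i * (Real.log l - Real.log (κ i)) ≤ κ i * (l / κ i - 1) :=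
          mul_le_mul_of_nonneg_left h1 (hκ i)
        have h3 : κ i * (l / κ i) = l := by field_simp
        nlinarith
    calc l * Real.log l
        = ∑ i, r i * (κ i * Real.log l + κ i - l) := by
          have h4 : ∀ i ∈ Finset.univ, r i * (κ i * Real.log l + κ i - l)
              = (r i * κ i) * Real.log l + r i * κ i - r i * l := fun i _ => by ring
          rw [Finset.sum_congr rfl h4, Finset.sum_sub_distrib, Finset.sum_add_distrib,
            ← Finset.sum_mul, ← Finset.sum_mul, ← hldef, hrsum]
          ring
      _ ≤ ∑ i, r i * (κ i * Real.log (κ i)) := Finset.sum_le_sum fun i _ => key i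

/-- Step I : `∑ μ log μ ≤ ∑ λ log λ + log T`. -/
lemma stepI {ι m : Type*} [Fintype ι] [Fintype m]
    (lam : ι → ℝ) (q : ι → m → ℝ) (μ : m → ℝ) (t : ι → ℝ) (T : ℝ)
    (hlam : ∀ α, 0 ≤ lam α) (hlsum : ∑ α, lam α = 1)
    (hq : ∀ α i, 0 ≤ q α i) (hqsum : ∀ α, ∑ i, q α i = 1)
    (hμ : ∀ i, μ i = ∑ α, lam α * q α i)
    (ht : ∀ α, t α = ∑ i, μ i * q α i)
    (htlam : ∀ α, lam α ≤ t α)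
    (hT : T = ∑ α, t α) :
    ∑ i, μ i * Real.log (μ i) ≤ (∑ α, lam α * Real.log (lam α)) + Real.log T := by
  have hμ0 : ∀ i, 0 ≤ μ i := fun i => by
    rw [hμ]; exact Finset.sum_nonneg fun α _ => mul_nonneg (hlam α) (hq α i)
  have ht0 : ∀ α, 0 ≤ t α := fun α => by
    rw [ht]; exact Finset.sum_nonneg fun i _ => mul_nonneg (hμ0 i) (hq α i)
  have step1 : ∑ i, μ i * Real.log (μ i) ≤ ∑ α, lam α * Real.log (t α) := by
    have swap : ∑ i, μ i * Real.log (μ i)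
        = ∑ α, lam α * ∑ i, q α i * Real.log (μ i) := by
      calc ∑ i, μ i * Real.log (μ i)
          = ∑ i, ∑ α, lam α * q α i * Real.log (μ i) := by
            apply Finset.sum_congr rfl; intro i _
            rw [hμ, Finset.sum_mul]
        _ = ∑ α, ∑ i, lam α * q α i * Real.log (μ i) := Finset.sum_comm
        _ = ∑ α, lam α * ∑ i, q α i * Real.log (μ i) := by
            apply Finset.sum_congr rfl; intro α _
            rw [Finset.mul_sum]; apply Finset.sum_congr rfl; intro i _; ring
    rw [swap]
    apply Finset.sum_le_sum
    intro α _
    rcases eq_or_lt_of_le (hlam α) with h0 | hpos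
    · simp [← h0]
    apply mul_le_mul_of_nonneg_left _ (hlam α)
    have hxpos : ∀ i, q α i ≠ 0 → 0 < μ i := by
      intro i hqi
      have h1 : lam α * q α i ≤ μ i := by
        rw [hμ]
        exact Finset.single_le_sum (f := fun β => lam β * q β i)
          (fun β _ => mul_nonneg (hlam β) (hq β i)) (Finset.mem_univ α)
      have : 0 < lam α * q α i :=
        mul_pos hpos (lt_of_le_of_ne (hq α i) (Ne.symm hqi))
      linarith
    have hspos : 0 < ∑ i, q α i * μ i := by
      have h2 : ∑ i, q α i * μ i = t α := by
        rw [ht]; apply Finset.sum_congr rfl; intro i _; ring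
      rw [h2]; exact lt_of_lt_of_le hpos (htlam α)
    calc ∑ i, q α i * Real.log (μ i)
        ≤ Real.log (∑ i, q α i * μ i) := jensen_log (q α) μ (hq α) (hqsum α) hxpos hspos
      _ = Real.log (t α) := by
          congr 1; rw [ht]; apply Finset.sum_congr rfl; intro i _; ring
  have step2 : ∑ α, lam α * Real.log (t α)
      ≤ (∑ α, lam α * Real.log (lam α)) + Real.log T := by
    set x : ι → ℝ := fun α => if lam α = 0 then 1 else t α / lam α with hxdef
    have hx1 : ∀ α, lam α ≠ 0 → 0 < x α := by
      intro α h
      have hpos : 0 < lam α := lt_of_le_of_ne (hlam α) (Ne.symm h)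
      simp only [hxdef, if_neg h]
      exact div_pos (lt_of_lt_of_le hpos (htlam α)) hpos
    have hterm : ∀ α, lam α * Real.log (t α)
        = lam α * Real.log (lam α) + lam α * Real.log (x α) := by
      intro α
      rcases eq_or_ne (lam α) 0 with h | h
      · simp [h]
      · have hpos : 0 < lam α := lt_of_le_of_ne (hlam α) (Ne.symm h)
        have htpos : 0 < t α := lt_of_lt_of_le hpos (htlam α)
        simp only [hxdef, if_neg h]
        rw [Real.log_div htpos.ne' h]
        ring
    have hxge : ∀ α, lam α ≤ lam α * x α := by
      intro α
      rcases eq_or_ne (lam α) 0 with h | h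
      · simp [h]
      · have hpos : 0 < lam α := lt_of_le_of_ne (hlam α) (Ne.symm h)
        simp only [hxdef, if_neg h]
        rw [mul_div_cancel₀ _ h]
        exact htlam α
    have hs1 : 1 ≤ ∑ α, lam α * x α := by
      rw [← hlsum]; exact Finset.sum_le_sum fun α _ => hxge α
    have hspos : 0 < ∑ α, lam α * x α := lt_of_lt_of_le one_pos hs1
    have hsle : ∑ α, lam α * x α ≤ T := by
      rw [hT]
      apply Finset.sum_le_sum
      intro α _
      rcases eq_or_ne (lam α) 0 with h | h
      · simp [h]; exact ht0 α
      · simp only [hxdef, if_neg h]; rw [mul_div_cancel₀ _ h]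
    calc ∑ α, lam α * Real.log (t α)
        = (∑ α, lam α * Real.log (lam α)) + ∑ α, lam α * Real.log (x α) := by
          rw [← Finset.sum_add_distrib]
          exact Finset.sum_congr rfl fun α _ => hterm α
      _ ≤ (∑ α, lam α * Real.log (lam α)) + Real.log (∑ α, lam α * x α) :=
          add_le_add_right (jensen_log lam x hlam hlsum hx1 hspos) _
      _ ≤ (∑ α, lam α * Real.log (lam α)) + Real.log T :=
          add_le_add_right (Real.log_le_log hspos hsle) _
  linarith

/-- Step II : `∑ λ log λ ≤ ∑ κ log κ`. -/
lemma stepII {ι m : Type*} [Fintype ι] [Fintype m]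
    (lam : ι → ℝ) (r : ι → m → ℝ) (κ : m → ℝ)
    (hr : ∀ α j, 0 ≤ r α j) (hκ : ∀ j, 0 ≤ κ j)
    (hrsum : ∀ α, ∑ j, r α j = 1)
    (hlam : ∀ α, lam α = ∑ j, r α j * κ j)
    (hcol : ∀ j, κ j ≠ 0 → ∑ α, r α j = 1) :
    ∑ α, lam α * Real.log (lam α) ≤ ∑ j, κ j * Real.log (κ j) := by
  calc ∑ α, lam α * Real.log (lam α)
      ≤ ∑ α, ∑ j, r α j * (κ j * Real.log (κ j)) := by
        apply Finset.sum_le_sum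
        intro α _
        rw [hlam]
        exact xlogx_jensen (r α) κ (hr α) hκ (hrsum α)
    _ = ∑ j, (∑ α, r α j) * (κ j * Real.log (κ j)) := by
        rw [Finset.sum_comm]
        exact Finset.sum_congr rfl fun j _ => (Finset.sum_mul _ _ _).symm
    _ ≤ ∑ j, κ j * Real.log (κ j) := by
        apply Finset.sum_le_sum
        intro j _
        rcases eq_or_ne (κ j) 0 with h | h
        · simp [h]
        · rw [hcol j h, one_mul]

/-! ### Matrix and inner-product lemmas -/

lemma dotProduct_sum' {ι m : Type*} [Fintype ι] [Fintype m] (v : m → ℂ) (f : ι → m → ℂ) :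
    v ⬝ᵥ (∑ α, f α) = ∑ α, v ⬝ᵥ f α := by
  simp only [dotProduct, Finset.sum_apply, Finset.mul_sum]
  exact Finset.sum_comm

lemma rankOneProj_mulVec {n : ℕ} (v : EuclideanSpace ℂ (Fin n)) (x : Fin n → ℂ) :
    rankOneProj v *ᵥ x
      = (star (WithLp.equiv 2 (Fin n → ℂ) v) ⬝ᵥ x) • (WithLp.equiv 2 (Fin n → ℂ) v) := by
  funext i
  simp only [rankOneProj, mulVec, dotProduct, vecMulVec_apply, Pi.smul_apply, smul_eq_mul,
    Finset.sum_mul, Pi.star_apply]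
  apply Finset.sum_congr rfl
  intro k _
  ring

lemma helperA {n : ℕ} {ι : Type*} [Fintype ι] (lam : ι → ℝ)
    (v : ι → EuclideanSpace ℂ (Fin n)) (x : Fin n → ℂ) :
    (∑ α, (lam α : ℂ) • rankOneProj (v α)) *ᵥ x
      = ∑ α, ((lam α : ℂ) * (star (WithLp.equiv 2 (Fin n → ℂ) (v α)) ⬝ᵥ x))
          • (WithLp.equiv 2 (Fin n → ℂ) (v α)) := by
  have h : (∑ α, (lam α : ℂ) • rankOneProj (v α)) *ᵥ x
      = ∑ α, ((lam α : ℂ) • rankOneProj (v α)) *ᵥ x := by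
    funext i
    simp only [mulVec, dotProduct, Matrix.sum_apply, Finset.sum_mul, Finset.sum_apply]
    exact Finset.sum_comm
  rw [h]
  apply Finset.sum_congr rfl
  intro α _
  rw [smul_mulVec, rankOneProj_mulVec, smul_smul]

lemma helperB {n : ℕ} {ι : Type*} [Fintype ι] (lam : ι → ℝ)
    (v : ι → EuclideanSpace ℂ (Fin n)) (x y : EuclideanSpace ℂ (Fin n)) :
    star (WithLp.equiv 2 (Fin n → ℂ) y)
        ⬝ᵥ ((∑ α, (lam α : ℂ) • rankOneProj (v α)) *ᵥ WithLp.equiv 2 (Fin n → ℂ) x)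
      = ∑ α, (lam α : ℂ) * (⟪v α, x⟫ * ⟪y, v α⟫) := by
  rw [helperA, dotProduct_sum']
  apply Finset.sum_congr rfl
  intro α _
  rw [dotProduct_smul, inner_eq_star_dotProduct',
    inner_eq_star_dotProduct', smul_eq_mul]
  ring

lemma vecMul_of_mulVec {n : ℕ} {B : Matrix (Fin n) (Fin n) ℂ} (hBH : Bᴴ = B)
    (v : Fin n → ℂ) (c : ℝ) (hv : B *ᵥ v = c • v) :
    star v ᵥ* B = c • star v := by
  calc star v ᵥ* B = star v ᵥ* (Bᴴ)ᴴ := by rw [conjTranspose_conjTranspose]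
    _ = star (Bᴴ *ᵥ v) := (star_mulVec _ _).symm
    _ = star (B *ᵥ v) := by rw [hBH]
    _ = c • star v := by rw [hv, star_smul]; simp

lemma helperC {n : ℕ} {B : Matrix (Fin n) (Fin n) ℂ} (hB : B.IsHermitian)
    (x : EuclideanSpace ℂ (Fin n)) :
    star (WithLp.equiv 2 (Fin n → ℂ) x) ⬝ᵥ (B *ᵥ WithLp.equiv 2 (Fin n → ℂ) x)
      = ∑ i, (hB.eigenvalues i : ℂ) * (Complex.normSq ⟪hB.eigenvectorBasis i, x⟫ : ℂ) := by
  have h1 : ∀ i, star (WithLp.equiv 2 (Fin n → ℂ) (hB.eigenvectorBasis i))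
        ⬝ᵥ (B *ᵥ WithLp.equiv 2 (Fin n → ℂ) x)
      = (hB.eigenvalues i : ℂ)
        * (star (WithLp.equiv 2 (Fin n → ℂ) (hB.eigenvectorBasis i))
            ⬝ᵥ WithLp.equiv 2 (Fin n → ℂ) x) := by
    intro i
    rw [dotProduct_mulVec]
    have h2 := vecMul_of_mulVec hB (WithLp.equiv 2 (Fin n → ℂ) (hB.eigenvectorBasis i))
      (hB.eigenvalues i) (hB.mulVec_eigenvectorBasis i)
    rw [h2, smul_dotProduct, Complex.real_smul]
  have hx : star (WithLp.equiv 2 (Fin n → ℂ) x) ⬝ᵥ (B *ᵥ WithLp.equiv 2 (Fin n → ℂ) x)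
      = ⟪x, (WithLp.equiv 2 (Fin n → ℂ)).symm (B *ᵥ WithLp.equiv 2 (Fin n → ℂ) x)⟫ := by
    rw [inner_eq_star_dotProduct', Equiv.apply_symm_apply]
  rw [hx, ← OrthonormalBasis.sum_inner_mul_inner hB.eigenvectorBasis]
  apply Finset.sum_congr rfl
  intro i _
  have h3 : ⟪hB.eigenvectorBasis i,
        (WithLp.equiv 2 (Fin n → ℂ)).symm (B *ᵥ WithLp.equiv 2 (Fin n → ℂ) x)⟫
      = (hB.eigenvalues i : ℂ) * ⟪hB.eigenvectorBasis i, x⟫ := by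
    rw [inner_eq_star_dotProduct', Equiv.apply_symm_apply, h1,
      inner_eq_star_dotProduct']
  rw [h3, ← inner_conj_symm (hB.eigenvectorBasis i) x, Complex.normSq_eq_conj_mul_self,
    Complex.conj_conj]
  ring

lemma inner_self_one {n : ℕ} (x : EuclideanSpace ℂ (Fin n)) (hx : ‖x‖ = 1) :
    ⟪x, x⟫ = 1 := by
  rw [inner_self_eq_norm_sq_to_K, hx]
  norm_num

lemma helperD {n : ℕ} (b : OrthonormalBasis (Fin n) ℂ (EuclideanSpace ℂ (Fin n)))
    (x : EuclideanSpace ℂ (Fin n)) (hx : ⟪x, x⟫ = 1) :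
    ∑ i, (Complex.normSq ⟪b i, x⟫ : ℝ) = 1 := by
  have h := OrthonormalBasis.sum_inner_mul_inner b x x
  have h2 : ∀ i ∈ Finset.univ, ⟪x, b i⟫ * ⟪b i, x⟫ = (Complex.normSq ⟪b i, x⟫ : ℂ) := by
    intro i _
    rw [← inner_conj_symm (b i) x, Complex.normSq_eq_conj_mul_self, Complex.conj_conj]
  rw [Finset.sum_congr rfl h2, hx] at h
  exact_mod_cast h

lemma helperE {n : ℕ} (u w : Fin n → ℂ) (B : Matrix (Fin n) (Fin n) ℂ) :
    trace (vecMulVec u w * B) = w ⬝ᵥ (B *ᵥ u) := by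
  simp only [trace, diag, mul_apply, vecMulVec_apply, dotProduct, mulVec, Finset.mul_sum]
  rw [Finset.sum_comm]
  apply Finset.sum_congr rfl
  intro i _
  apply Finset.sum_congr rfl
  intro k _
  ring

open scoped ComplexOrder in
lemma helperF {n : ℕ} {ι : Type*} [Fintype ι] (lam : ι → ℝ) (hlam : ∀ α, 0 ≤ lam α)
    (v : ι → EuclideanSpace ℂ (Fin n)) {A : Matrix (Fin n) (Fin n) ℂ}
    (hA : A = ∑ α, (lam α : ℂ) • rankOneProj (v α)) (hAH : A.IsHermitian) :
    A.PosSemidef := by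
  refine Matrix.PosSemidef.of_dotProduct_mulVec_nonneg hAH fun x => ?_
  rw [hA, helperA, dotProduct_sum']
  apply Finset.sum_nonneg
  intro α _
  rw [dotProduct_smul, smul_eq_mul]
  have h : star x ⬝ᵥ WithLp.equiv 2 (Fin n → ℂ) (v α)
      = star (star (WithLp.equiv 2 (Fin n → ℂ) (v α)) ⬝ᵥ x) := by
    rw [star_dotProduct]
  rw [h, mul_assoc, Complex.star_def, Complex.mul_conj, ← Complex.ofReal_mul]
  exact Complex.zero_le_real.2 (mul_nonneg (hlam α) (Complex.normSq_nonneg _))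

/-- if `Γ = ∑ λ_α |ψ_α⟩⟨ψ_α|` with `(ψ_α)` orthonormal and
`Γ̂ = ∑ λ_α P_α` with `P_α = |φ_α⟩⟨φ_α|` rank-one projections (not necessarily
mutually orthogonal), then `S(Γ̂) ≥ S(Γ) − log Tr(∑_α P_α Γ̂)`. -/
theorem stmt_4 {n : ℕ} {ι : Type*} [Fintype ι]
    (lam : ι → ℝ) (hlam : ∀ α, 0 ≤ lam α) (hsum : ∑ α, lam α = 1)
    (ψ φ : ι → EuclideanSpace ℂ (Fin n))
    (hψ : Orthonormal ℂ ψ) (hφ : ∀ α, ‖φ α‖ = 1)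
    (Γ Γhat : Matrix (Fin n) (Fin n) ℂ)
    (hΓ : Γ = ∑ α, (lam α : ℂ) • rankOneProj (ψ α))
    (hΓhat : Γhat = ∑ α, (lam α : ℂ) • rankOneProj (φ α))
    (hΓH : Γ.IsHermitian) (hΓhatH : Γhat.IsHermitian) :
    vnEntropy hΓH - Real.log (Matrix.trace ((∑ α, rankOneProj (φ α)) * Γhat)).re ≤
      vnEntropy hΓhatH := by
  classical
  have hBhat : ∀ x y : EuclideanSpace ℂ (Fin n),
      star (WithLp.equiv 2 (Fin n → ℂ) y) ⬝ᵥ (Γhat *ᵥ WithLp.equiv 2 (Fin n → ℂ) x)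
        = ∑ α, (lam α : ℂ) * (⟪φ α, x⟫ * ⟪y, φ α⟫) := by
    intro x y; rw [hΓhat]; exact helperB lam φ x y
  have hBΓ : ∀ x y : EuclideanSpace ℂ (Fin n),
      star (WithLp.equiv 2 (Fin n → ℂ) y) ⬝ᵥ (Γ *ᵥ WithLp.equiv 2 (Fin n → ℂ) x)
        = ∑ α, (lam α : ℂ) * (⟪ψ α, x⟫ * ⟪y, ψ α⟫) := by
    intro x y; rw [hΓ]; exact helperB lam ψ x y
  have hψite : ∀ α β, ⟪ψ α, ψ β⟫ = if α = β then 1 else 0 := fun α β =>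
    (orthonormal_iff_ite.mp hψ) α β
  have heite : ∀ i j, ⟪hΓhatH.eigenvectorBasis i, hΓhatH.eigenvectorBasis j⟫
      = if i = j then 1 else 0 := fun i j =>
    (orthonormal_iff_ite.mp hΓhatH.eigenvectorBasis.orthonormal) i j
  have hfite : ∀ i j, ⟪hΓH.eigenvectorBasis i, hΓH.eigenvectorBasis j⟫
      = if i = j then 1 else 0 := fun i j =>
    (orthonormal_iff_ite.mp hΓH.eigenvectorBasis.orthonormal) i j
  have hφone : ∀ α, ⟪φ α, φ α⟫ = 1 := fun α => inner_self_one _ (hφ α)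
  have hψone : ∀ α, ⟪ψ α, ψ α⟫ = 1 := fun α => by simpa using hψite α α
  -- eigen sides of quadratic forms
  have hQe : ∀ i, star (WithLp.equiv 2 (Fin n → ℂ) (hΓhatH.eigenvectorBasis i))
      ⬝ᵥ (Γhat *ᵥ WithLp.equiv 2 (Fin n → ℂ) (hΓhatH.eigenvectorBasis i))
      = (hΓhatH.eigenvalues i : ℂ) := by
    intro i
    rw [mulVec_eigenvectorBasis' hΓhatH i, dotProduct_smul,
      ← inner_eq_star_dotProduct']
    rw [show ⟪hΓhatH.eigenvectorBasis i, hΓhatH.eigenvectorBasis i⟫ = 1 by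
      simpa using heite i i]
    rw [Complex.real_smul, mul_one]
  have hQf : ∀ j, star (WithLp.equiv 2 (Fin n → ℂ) (hΓH.eigenvectorBasis j))
      ⬝ᵥ (Γ *ᵥ WithLp.equiv 2 (Fin n → ℂ) (hΓH.eigenvectorBasis j))
      = (hΓH.eigenvalues j : ℂ) := by
    intro j
    rw [mulVec_eigenvectorBasis' hΓH j, dotProduct_smul,
      ← inner_eq_star_dotProduct']
    rw [show ⟪hΓH.eigenvectorBasis j, hΓH.eigenvectorBasis j⟫ = 1 by
      simpa using hfite j j]
    rw [Complex.real_smul, mul_one]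
  -- abbreviations (plain functions, no `set`)
  -- q α i = normSq ⟪e i, φ α⟫ ; r α j = normSq ⟪f j, ψ α⟫ ; t α = ∑ i μ i * q α i
  -- (b) μ i = ∑ α lam α * q α i
  have hμq : ∀ i, hΓhatH.eigenvalues i
      = ∑ α, lam α * Complex.normSq ⟪hΓhatH.eigenvectorBasis i, φ α⟫ := by
    intro i
    have h1 : (hΓhatH.eigenvalues i : ℂ)
        = ∑ α, ((lam α * Complex.normSq ⟪hΓhatH.eigenvectorBasis i, φ α⟫ : ℝ) : ℂ) := by
      rw [← hQe i, hBhat (hΓhatH.eigenvectorBasis i) (hΓhatH.eigenvectorBasis i)]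
      apply Finset.sum_congr rfl
      intro α _
      rw [Complex.ofReal_mul, Complex.normSq_eq_conj_mul_self, inner_conj_symm]

    rw [← Complex.ofReal_sum] at h1
    exact_mod_cast h1
  -- (c) t α as quadratic form
  have htq : ∀ α, star (WithLp.equiv 2 (Fin n → ℂ) (φ α))
      ⬝ᵥ (Γhat *ᵥ WithLp.equiv 2 (Fin n → ℂ) (φ α))
      = ((∑ i, hΓhatH.eigenvalues i
          * Complex.normSq ⟪hΓhatH.eigenvectorBasis i, φ α⟫ : ℝ) : ℂ) := by
    intro α
    rw [helperC hΓhatH (φ α)]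
    push_cast
    rfl
  -- (d) the second expression for t α and lam α ≤ t α
  have hts : ∀ α, (∑ i, hΓhatH.eigenvalues i
        * Complex.normSq ⟪hΓhatH.eigenvectorBasis i, φ α⟫)
      = ∑ β, lam β * Complex.normSq ⟪φ β, φ α⟫ := by
    intro α
    have h1 : ((∑ i, hΓhatH.eigenvalues i
          * Complex.normSq ⟪hΓhatH.eigenvectorBasis i, φ α⟫ : ℝ) : ℂ)
        = ∑ β, ((lam β * Complex.normSq ⟪φ β, φ α⟫ : ℝ) : ℂ) := by
      rw [← htq α, hBhat (φ α) (φ α)]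
      apply Finset.sum_congr rfl
      intro β _
      rw [Complex.ofReal_mul, Complex.normSq_eq_conj_mul_self, inner_conj_symm]
      ring
    rw [← Complex.ofReal_sum] at h1
    exact_mod_cast h1
  have htlam : ∀ α, lam α ≤ ∑ i, hΓhatH.eigenvalues i
      * Complex.normSq ⟪hΓhatH.eigenvectorBasis i, φ α⟫ := by
    intro α
    rw [hts α]
    have h2 := Finset.single_le_sum
      (f := fun β => lam β * Complex.normSq ⟪φ β, φ α⟫)
      (fun β _ => mul_nonneg (hlam β) (Complex.normSq_nonneg _)) (Finset.mem_univ α)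
    rwa [hφone α, Complex.normSq_one, mul_one] at h2
  -- (e),(g) row sums
  have hqsum : ∀ α, ∑ i, Complex.normSq ⟪hΓhatH.eigenvectorBasis i, φ α⟫ = 1 := fun α =>
    helperD hΓhatH.eigenvectorBasis (φ α) (hφone α)
  have hrsum : ∀ α, ∑ j, Complex.normSq ⟪hΓH.eigenvectorBasis j, ψ α⟫ = 1 := fun α =>
    helperD hΓH.eigenvectorBasis (ψ α) (hψone α)
  -- (h) lam α = ∑ j r α j * κ j
  have hlamr : ∀ α, lam α = ∑ j, Complex.normSq ⟪hΓH.eigenvectorBasis j, ψ α⟫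
      * hΓH.eigenvalues j := by
    intro α
    have h1 : star (WithLp.equiv 2 (Fin n → ℂ) (ψ α))
        ⬝ᵥ (Γ *ᵥ WithLp.equiv 2 (Fin n → ℂ) (ψ α)) = (lam α : ℂ) := by
      rw [hBΓ (ψ α) (ψ α)]
      rw [Finset.sum_eq_single α]
      · rw [hψone α, mul_one, mul_one]
      · intro β _ hβ
        rw [hψite α β, if_neg (fun h => hβ h.symm), mul_zero, mul_zero]
      · intro h; exact absurd (Finset.mem_univ α) h
    have h2 : (lam α : ℂ) = ∑ j, ((Complex.normSq ⟪hΓH.eigenvectorBasis j, ψ α⟫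
        * hΓH.eigenvalues j : ℝ) : ℂ) := by
      rw [← h1, helperC hΓH (ψ α)]
      apply Finset.sum_congr rfl
      intro j _
      push_cast
      ring
    rw [← Complex.ofReal_sum] at h2
    exact_mod_cast h2
  -- (i) column sums for nonzero eigenvalues
  have hcol : ∀ j, hΓH.eigenvalues j ≠ 0
      → ∑ α, Complex.normSq ⟪hΓH.eigenvectorBasis j, ψ α⟫ = 1 := by
    intro j hj
    have h1 : ∀ α, (lam α : ℂ) * ⟪ψ α, hΓH.eigenvectorBasis j⟫
        = (hΓH.eigenvalues j : ℂ) * ⟪ψ α, hΓH.eigenvectorBasis j⟫ := by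
      intro α
      have hL : star (WithLp.equiv 2 (Fin n → ℂ) (ψ α))
          ⬝ᵥ (Γ *ᵥ WithLp.equiv 2 (Fin n → ℂ) (hΓH.eigenvectorBasis j))
          = (lam α : ℂ) * ⟪ψ α, hΓH.eigenvectorBasis j⟫ := by
        rw [hBΓ (hΓH.eigenvectorBasis j) (ψ α)]
        rw [Finset.sum_eq_single α]
        · rw [hψone α, mul_one]
        · intro β _ hβ
          rw [hψite α β, if_neg (fun h => hβ h.symm), mul_zero, mul_zero]
        · intro h; exact absurd (Finset.mem_univ α) h
      have hR : star (WithLp.equiv 2 (Fin n → ℂ) (ψ α))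
          ⬝ᵥ (Γ *ᵥ WithLp.equiv 2 (Fin n → ℂ) (hΓH.eigenvectorBasis j))
          = (hΓH.eigenvalues j : ℂ) * ⟪ψ α, hΓH.eigenvectorBasis j⟫ := by
        rw [mulVec_eigenvectorBasis' hΓH j, dotProduct_smul,
          ← inner_eq_star_dotProduct', Complex.real_smul]
      rw [← hL, hR]
    have h2 : ∀ α, lam α * Complex.normSq ⟪hΓH.eigenvectorBasis j, ψ α⟫
        = hΓH.eigenvalues j * Complex.normSq ⟪hΓH.eigenvectorBasis j, ψ α⟫ := by
      intro α
      have h3 := congrArg (fun z => z * (starRingEnd ℂ) ⟪ψ α, hΓH.eigenvectorBasis j⟫) (h1 α)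
      rw [mul_assoc, mul_assoc, Complex.mul_conj] at h3
      have h4 : Complex.normSq ⟪ψ α, hΓH.eigenvectorBasis j⟫
          = Complex.normSq ⟪hΓH.eigenvectorBasis j, ψ α⟫ := by
        rw [← inner_conj_symm (hΓH.eigenvectorBasis j) (ψ α), Complex.normSq_conj]
      rw [h4] at h3
      exact_mod_cast h3
    have h5 : (hΓH.eigenvalues j : ℂ)
        = ∑ α, ((lam α * Complex.normSq ⟪hΓH.eigenvectorBasis j, ψ α⟫ : ℝ) : ℂ) := by
      rw [← hQf j, hBΓ (hΓH.eigenvectorBasis j) (hΓH.eigenvectorBasis j)]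
      apply Finset.sum_congr rfl
      intro α _
      rw [Complex.ofReal_mul, Complex.normSq_eq_conj_mul_self, inner_conj_symm]

    have h6 : hΓH.eigenvalues j
        = ∑ α, lam α * Complex.normSq ⟪hΓH.eigenvectorBasis j, ψ α⟫ := by
      rw [← Complex.ofReal_sum] at h5
      exact_mod_cast h5
    have h8 : hΓH.eigenvalues j * ∑ α, Complex.normSq ⟪hΓH.eigenvectorBasis j, ψ α⟫
        = hΓH.eigenvalues j := by
      rw [Finset.mul_sum]
      rw [Finset.sum_congr rfl fun α _ => (h2 α).symm]
      exact h6.symm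
    exact mul_left_cancel₀ hj (by rw [h8, mul_one])
  -- (j) trace identity
  have hT : (Matrix.trace ((∑ α, rankOneProj (φ α)) * Γhat)).re
      = ∑ α, ∑ i, hΓhatH.eigenvalues i
          * Complex.normSq ⟪hΓhatH.eigenvectorBasis i, φ α⟫ := by
    have h1 : (∑ α, rankOneProj (φ α)) * Γhat = ∑ α, rankOneProj (φ α) * Γhat :=
      Finset.sum_mul _ _ _
    rw [h1, trace_sum]
    have h2 : ∀ α ∈ Finset.univ, Matrix.trace (rankOneProj (φ α) * Γhat)
        = ((∑ i, hΓhatH.eigenvalues i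
            * Complex.normSq ⟪hΓhatH.eigenvectorBasis i, φ α⟫ : ℝ) : ℂ) := by
      intro α _
      rw [show rankOneProj (φ α) = vecMulVec (WithLp.equiv 2 (Fin n → ℂ) (φ α))
        (star (WithLp.equiv 2 (Fin n → ℂ) (φ α))) from rfl]
      rw [helperE]
      exact htq α
    rw [Finset.sum_congr rfl h2, ← Complex.ofReal_sum, Complex.ofReal_re]
  -- PSD of Γ : eigenvalues nonneg
  have hκ0 : ∀ j, 0 ≤ hΓH.eigenvalues j := fun j =>
    (helperF lam hlam ψ hΓ hΓH).eigenvalues_nonneg j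
  -- conclude
  have hI := stepI lam (fun α i => Complex.normSq ⟪hΓhatH.eigenvectorBasis i, φ α⟫)
    hΓhatH.eigenvalues
    (fun α => ∑ i, hΓhatH.eigenvalues i * Complex.normSq ⟪hΓhatH.eigenvectorBasis i, φ α⟫)
    (Matrix.trace ((∑ α, rankOneProj (φ α)) * Γhat)).re
    hlam hsum (fun α i => Complex.normSq_nonneg _) hqsum hμq (fun α => rfl) htlam hT
  have hII := stepII lam (fun α j => Complex.normSq ⟪hΓH.eigenvectorBasis j, ψ α⟫)
    hΓH.eigenvalues (fun α j => Complex.normSq_nonneg _) hκ0 hrsum hlamr hcol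
  simp only [vnEntropy]
  linarith
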